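/- Every C-finite sequence admits a closed form as an exponential polynomial: if (a_n) is a sequence of complex numbers satisfying a linear recurrence a_{n+l} = c_{l-1} a_{n+l-1} + ... + c_0 a_n with constant complex coefficients c_i and c_0 ≠ 0, then there exist finitely many complex numbers u_1,...,u_m (the roots of the characteristic polynomial) and polynomials q_1,...,q_m such that a_n = sum_{i=1}^m q_i(n) · u_i^n for all n. -/

import Mathlib

/-!
The shift `E a = a (· + 1)` maps the solution space `V` of the recurrence into itself; `V` is
finite dimensional, and `E` is injective on `V` because `c₀ ≠ 0`. Over an algebraically closed
field `V` is therefore spanned by generalized eigenvectors of `E` with nonzero eigenvalues. If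
`(E - μ)^k a = 0` with `μ ≠ 0`, then `A n = a n / μ^n` satisfies `Δ^k A = 0`, so by the
Gregory–Newton formula `A n = ∑_{j<k} (n choose j) Δ^j A 0` is a polynomial in `n`.
-/

open Polynomial Finset Module
open scoped fwdDiff Nat

variable {K : Type*} [Field K]

variable (K) in
def shift : End K (ℕ → K) := LinearMap.funLeft K K (· + 1)

@[simp] lemma shift_apply (a : ℕ → K) (n : ℕ) : shift K a n = a (n + 1) := rfl

variable (K) in
def expPoly : Submodule K (ℕ → K) where
  carrier := {a | ∃ (m : ℕ) (u : Fin m → K) (q : Fin m → K[X]),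
    ∀ n : ℕ, a n = ∑ i : Fin m, (q i).eval (n : K) * u i ^ n}
  zero_mem' := ⟨0, Fin.elim0, Fin.elim0, fun _ => rfl⟩
  add_mem' := by
    rintro a b ⟨m, u, q, ha⟩ ⟨m', u', q', hb⟩
    refine ⟨m + m', Fin.append u u', Fin.append q q', fun n => ?_⟩
    simp [Fin.sum_univ_add, ha n, hb n]
  smul_mem' := by
    rintro r a ⟨m, u, q, ha⟩
    refine ⟨m, u, fun i => C r * q i, fun n => ?_⟩
    simp [ha n, mul_sum, mul_assoc]

theorem exists_polynomial_eq_of_fwdDiff_iter_eq_zero [CharZero K] {A : ℕ → K} {k : ℕ}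
    (hA : (Δ_[1])^[k] A = 0) : ∃ Q : K[X], ∀ n : ℕ, A n = Q.eval (n : K) := by
  refine ⟨∑ j ∈ range k, C ((Δ_[1])^[j] A 0 / j !) * descPochhammer K j, fun n => ?_⟩
  set f : ℕ → K := fun j => n.choose j * (Δ_[1])^[j] A 0
  have hf_high : ∀ j ≥ k, f j = 0 := fun j hj => by
    obtain ⟨i, rfl⟩ := Nat.exists_eq_add_of_le' hj
    have hzero : (Δ_[1])^[i] (0 : ℕ → K) = 0 := Function.iterate_fixed (fwdDiff_const 1 0) i
    simp [f, Function.iterate_add_apply, hA, hzero]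
  have hf_choose : ∀ j ≥ n + 1, f j = 0 := fun j hj => by
    simp [f, Nat.choose_eq_zero_of_lt hj]
  calc A n = ∑ j ∈ range (n + 1), f j := by
        simpa [f] using shift_eq_sum_fwdDiff_iter 1 A n 0
    _ = ∑ j ∈ range k, f j := by
        rw [← eventually_constant_sum hf_choose (Nat.le_add_right _ k),
          eventually_constant_sum hf_high (Nat.le_add_left _ _)]
    _ = _ := by
        simp only [f, Nat.cast_choose_eq_descPochhammer_div, eval_finsetSum, eval_mul, eval_C]
        exact sum_congr rfl fun _ _ => by ring

theorem shift_sub_smul_one_pow_apply (μ : K) (A : ℕ → K) (k n : ℕ) :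
    ((shift K - μ • 1) ^ k) (fun m => μ ^ m * A m) n = μ ^ (n + k) * (Δ_[1])^[k] A n := by
  induction k generalizing n with
  | zero => simp
  | succ k ih =>
    rw [pow_succ', Module.End.mul_apply, LinearMap.sub_apply, LinearMap.smul_apply, Pi.sub_apply,
      shift_apply, Pi.smul_apply, Module.End.one_apply, ih, ih, Function.iterate_succ_apply',
      fwdDiff, smul_eq_mul]
    ring

theorem mem_expPoly_of_mem_maxGenEigenspace_shift [CharZero K] {μ : K} (hμ : μ ≠ 0)
    {a : ℕ → K} (ha : a ∈ (shift K).maxGenEigenspace μ) : a ∈ expPoly K := by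
  obtain ⟨k, hk⟩ := End.mem_genEigenspace_top.mp ha
  set A : ℕ → K := fun n => a n / μ ^ n
  have haA : a = fun n => μ ^ n * A n := by
    ext n
    simp [A, mul_div_cancel₀ _ (pow_ne_zero n hμ)]
  have hA : (Δ_[1])^[k] A = 0 := by
    ext n
    have := congr_fun (LinearMap.mem_ker.mp hk) n
    rw [haA, shift_sub_smul_one_pow_apply] at this
    simpa [hμ] using this
  obtain ⟨Q, hQ⟩ := exists_polynomial_eq_of_fwdDiff_iter_eq_zero hA
  refine ⟨1, fun _ => μ, fun _ => Q, fun n => ?_⟩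
  rw [haA]
  simp [hQ, mul_comm]

theorem le_expPoly_of_finiteDimensional [IsAlgClosed K] [CharZero K] (V : Submodule K (ℕ → K))
    [FiniteDimensional K V] (hV : ∀ a ∈ V, shift K a ∈ V)
    (hinj : ∀ a ∈ V, shift K a = 0 → a = 0) : V ≤ expPoly K := by
  set f : End K V := (shift K).restrict hV
  have hf : Function.Injective f := by
    refine (injective_iff_map_eq_zero f).mpr fun x hx => Subtype.ext (hinj x x.2 ?_)
    exact congrArg Subtype.val hx
  intro a ha
  have hmem : (⟨a, ha⟩ : V) ∈ ⨆ μ, f.maxGenEigenspace μ := by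
    rw [End.iSup_maxGenEigenspace_eq_top]
    trivial
  refine Submodule.iSup_induction _ (motive := fun x : V => (x : ℕ → K) ∈ expPoly K) hmem
    (fun μ x hx => ?_) (zero_mem _) (fun _ _ => add_mem)
  rcases eq_or_ne μ 0 with rfl | hμ
  · obtain ⟨k, hk⟩ := End.mem_genEigenspace_top.mp hx
    have hf0 : f - (0 : K) • 1 = f := LinearMap.ext fun _ => by simp
    rw [LinearMap.mem_ker, hf0, ← map_zero (f ^ k), End.coe_pow] at hk
    simp [(hf.iterate k) hk, zero_mem]
  · rw [End.maxGenEigenspace, End.genEigenspace_restrict] at hx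
    exact mem_expPoly_of_mem_maxGenEigenspace_shift hμ hx

namespace LinearRecurrence

variable (E : LinearRecurrence K)

theorem shift_mem_solSpace {a : ℕ → K} (ha : a ∈ E.solSpace) : shift K a ∈ E.solSpace := by
  intro n
  simpa [add_right_comm] using ha (n + 1)

theorem eq_zero_of_shift_eq_zero (h0 : 0 < E.order) (hc : E.coeffs ⟨0, h0⟩ ≠ 0)
    {a : ℕ → K} (ha : a ∈ E.solSpace) (hshift : shift K a = 0) : a = 0 := by
  have hsucc : ∀ n, a (n + 1) = 0 := fun n => congr_fun hshift n
  have ha0 : a 0 = 0 := by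
    have hc_mul : 0 = E.coeffs ⟨0, h0⟩ * a 0 := by
      calc 0 = a (0 + E.order) := by rw [zero_add, ← Nat.sub_add_cancel h0, hsucc]
        _ = _ := by
          rw [ha 0, Fintype.sum_eq_single ⟨0, h0⟩]
          · rfl
          rintro ⟨_ | i, hi⟩ hne
          · exact absurd rfl hne
          · simp [hsucc]
    exact (mul_eq_zero.mp hc_mul.symm).resolve_left hc
  ext (_ | n)
  · exact ha0
  · exact hsucc n

theorem solSpace_le_expPoly [IsAlgClosed K] [CharZero K] (h0 : 0 < E.order)
    (hc : E.coeffs ⟨0, h0⟩ ≠ 0) : E.solSpace ≤ expPoly K :=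
  have : FiniteDimensional K E.solSpace := .of_basis E.basis
  le_expPoly_of_finiteDimensional _ (fun _ => E.shift_mem_solSpace)
    (fun _ => E.eq_zero_of_shift_eq_zero h0 hc)

end LinearRecurrence

/-- Closed forms of C-finite sequences: every complex sequence satisfying a
homogeneous linear recurrence with constant coefficients (with nonzero lowest
coefficient) is an exponential polynomial, i.e. there are complex numbers
`u 1, …, u m` and polynomials `q 1, …, q m` with
`a n = ∑ i, q i (n) · (u i)^n` for all `n`. -/
theorem cfinite_closed_form (l : ℕ) (hl : 0 < l) (a : ℕ → ℂ) (c : Fin l → ℂ)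
    (hc0 : c ⟨0, hl⟩ ≠ 0)
    (hrec : ∀ n : ℕ, a (n + l) = ∑ i : Fin l, c i * a (n + i)) :
    ∃ (m : ℕ) (u : Fin m → ℂ) (q : Fin m → Polynomial ℂ),
      ∀ n : ℕ, a n = ∑ i : Fin m, (q i).eval (n : ℂ) * u i ^ n :=
  LinearRecurrence.solSpace_le_expPoly ⟨l, c⟩ hl hc0 hrec
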